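/- For p ∈ ℕ, s ∈ ℤ, and τ,w in the upper half-plane with w ≠ τ, the completed rank-one false theta function ψ̂^{[A₁]}_{p,s}(τ,w) := Σ_{n∈ℤ+s/(2p)} erf(−i√(2πip(w−τ)) n) q^{pn²} (with q := e^{2πiτ}) admits the Eichler integral representation ψ̂^{[A₁]}_{p,s}(τ,w) = √(2p) ∫_τ^w θ^{[1]}_{p,s}(w₁)/√(i(w₁−τ)) dw₁, where θ^{[1]}_{p,s}(τ) := Σ_{n∈ℤ+s/(2p)} n q^{pn²}, the integral is along a path from τ to w not crossing the vertical branch cut of √(i(w₁−τ)), and all square roots are principal. -/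

import Mathlib

/-!
Termwise. With `z = -i√(2πip(w-τ)) n` one has `z² = -2πi p n² (w-τ)`, so in
`erf z = (2/√π) ∫₀¹ z e^{-t²z²} dt` the Gaussian times `q^{pn²}` is `e^{2πi p n² (τ + t²(w-τ))}`.
The substitution `t ↦ t²` turns this into an integral against `dt/√t` along the segment
`w₁ = τ + t(w-τ)`, and `√(i t (w-τ)) = √t √(i(w-τ))` matches it with `√(2p)` times the integral of
the `n`-th summand of `θ^{[1]}_{p,s}(w₁)/√(i(w₁-τ))`; the constants agree because
`√(2πip(w-τ)) = √(2πp) √(i(w-τ))`. On the segment `Im w₁ ≥ δ := min (Im τ) (Im w) > 0`, so the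
summands are dominated by `|n| e^{-2πpδn²}/√t`, which is summable in `n` and integrable in `t`;
hence sum and integral commute.
-/

open MeasureTheory
open scoped Real

noncomputable section

/-- The entire error function `erf(z) = (2/√π) ∫_0^z e^{−t²} dt`, parametrized along the
straight segment from `0` to `z`. -/
def cerf (z : ℂ) : ℂ :=
  ((2 / Real.sqrt Real.pi : ℝ) : ℂ) * ∫ t in (0:ℝ)..1, z * Complex.exp (-(((t:ℂ) * z) ^ 2))

/-- The weight `3/2` unary theta function `θ^{[1]}_{p,s}(τ) = Σ_{n∈ℤ+s/(2p)} n q^{pn²}`. -/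
def theta1 (p : ℕ) (s : ℤ) (τ : ℂ) : ℂ :=
  ∑' ν : ℤ, ((ν : ℂ) + (s : ℂ) / (2 * (p : ℂ))) *
    Complex.exp (2 * (Real.pi : ℂ) * Complex.I * τ * (p : ℂ) *
      ((ν : ℂ) + (s : ℂ) / (2 * (p : ℂ))) ^ 2)

/-- The completed rank-one false theta function
`ψ̂^{[A₁]}_{p,s}(τ,w) = Σ_{n∈ℤ+s/(2p)} erf(−i√(2πip(w−τ)) n) q^{pn²}`. -/
def psiA1 (p : ℕ) (s : ℤ) (τ w : ℂ) : ℂ :=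
  ∑' ν : ℤ,
    cerf (-Complex.I * (2 * (Real.pi : ℂ) * Complex.I * (p : ℂ) * (w - τ)) ^ ((1:ℂ)/2) *
        ((ν : ℂ) + (s : ℂ) / (2 * (p : ℂ)))) *
      Complex.exp (2 * (Real.pi : ℂ) * Complex.I * τ * (p : ℂ) *
        ((ν : ℂ) + (s : ℂ) / (2 * (p : ℂ))) ^ 2)

section

open Complex

lemma Complex.div_cpow_half_self (x : ℂ) : x / x ^ ((1:ℂ)/2) = x ^ ((1:ℂ)/2) := by
  have hsq : (x ^ ((1:ℂ)/2)) ^ 2 = x := by rw [one_div, cpow_ofNat_inv_pow]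
  by_cases h : x ^ ((1:ℂ)/2) = 0
  · rw [h, div_zero]
  · rw [div_eq_iff h, ← sq, hsq]

lemma Complex.ofReal_mul_cpow {r : ℝ} (hr : 0 ≤ r) (z w : ℂ) :
    ((r : ℂ) * z) ^ w = (r : ℂ) ^ w * z ^ w := by
  rcases eq_or_ne w 0 with rfl | hw
  · simp
  rcases hr.eq_or_lt with rfl | hr
  · simp [zero_cpow hw]
  rcases eq_or_ne z 0 with rfl | hz
  · simp [zero_cpow hw]
  have hr' : (r : ℂ) ≠ 0 := ofReal_ne_zero.mpr hr.ne'
  rw [cpow_def_of_ne_zero (mul_ne_zero hr' hz), log_ofReal_mul hr hz, ofReal_log hr.le, add_mul,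
    exp_add, ← cpow_def_of_ne_zero hr', ← cpow_def_of_ne_zero hz]

lemma Complex.ofReal_mul_cpow_half {r : ℝ} (hr : 0 ≤ r) (z : ℂ) :
    ((r : ℂ) * z) ^ ((1:ℂ)/2) = (√r : ℂ) * z ^ ((1:ℂ)/2) := by
  rw [Complex.ofReal_mul_cpow hr, Real.sqrt_eq_rpow, Complex.ofReal_cpow hr]
  norm_num

lemma integral_Ioc_zero_one_inv_sqrt_smul {E : Type*} [NormedAddCommGroup E] [NormedSpace ℝ E]
    (g : ℝ → E) :
    ∫ t in Set.Ioc (0:ℝ) 1, (√t)⁻¹ • g t = (2:ℝ) • ∫ u in Set.Ioc (0:ℝ) 1, g (u ^ 2) := by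
  have himage : (fun u : ℝ => u ^ 2) '' Set.Ioc 0 1 = Set.Ioc 0 1 := by
    ext t
    constructor
    · rintro ⟨u, ⟨hu0, hu1⟩, rfl⟩
      exact ⟨by positivity, pow_le_one₀ hu0.le hu1⟩
    · rintro ⟨ht0, ht1⟩
      exact ⟨√t, ⟨Real.sqrt_pos.2 ht0, Real.sqrt_le_one.2 ht1⟩, Real.sq_sqrt ht0.le⟩
  have hinj : Set.InjOn (fun u : ℝ => u ^ 2) (Set.Ioc 0 1) := fun a ha b hb h =>
    (pow_left_inj₀ ha.1.le hb.1.le two_ne_zero).1 h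
  have hderiv : ∀ u ∈ Set.Ioc (0:ℝ) 1,
      HasDerivWithinAt (fun u : ℝ => u ^ 2) (2 * u) (Set.Ioc 0 1) u := fun u _ => by
    simpa using (hasDerivAt_pow 2 u).hasDerivWithinAt
  rw [← integral_smul]
  conv_lhs => rw [← himage, integral_image_eq_integral_abs_deriv_smul measurableSet_Ioc hderiv hinj]
  refine setIntegral_congr_fun measurableSet_Ioc fun u hu => ?_
  have hu : 0 < u := hu.1
  rw [smul_smul, Real.sqrt_sq hu.le, abs_of_pos (by positivity)]
  field_simp

lemma integral_tsum_smul_of_norm_le {α ι E : Type*} [MeasurableSpace α] [Countable ι]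
    [NormedAddCommGroup E] [NormedSpace ℝ E] {μ : Measure α} {φ : α → ℝ} (hφ : Integrable φ μ)
    {g : ι → α → E} (hg : ∀ i, AEStronglyMeasurable (g i) μ) {b : ι → ℝ} (hb : Summable b)
    (hgb : ∀ i, ∀ᵐ x ∂μ, ‖g i x‖ ≤ b i) :
    ∫ x, ∑' i, φ x • g i x ∂μ = ∑' i, ∫ x, φ x • g i x ∂μ := by
  have hint : ∀ i, Integrable (fun x => φ x • g i x) μ := fun i =>
    hφ.smul_bdd (b i) (hg i) (hgb i)
  refine (integral_tsum_of_summable_integral_norm hint ?_).symm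
  refine (hb.mul_left (∫ x, ‖φ x‖ ∂μ)).of_nonneg_of_le
    (fun i => integral_nonneg fun x => norm_nonneg _) fun i => ?_
  calc ∫ x, ‖φ x • g i x‖ ∂μ ≤ ∫ x, ‖φ x‖ * b i ∂μ := by
        refine integral_mono_ae (hint i).norm (hφ.norm.mul_const _) ?_
        filter_upwards [hgb i] with x hx
        rw [norm_smul]
        gcongr
    _ = (∫ x, ‖φ x‖ ∂μ) * b i := integral_mul_const _ _

lemma integrableOn_Ioc_zero_one_inv_sqrt : IntegrableOn (fun t : ℝ => (√t)⁻¹) (Set.Ioc 0 1) := by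
  have h := intervalIntegral.intervalIntegrable_rpow' (a := 0) (b := 1) (r := -(1/2)) (by norm_num)
  rw [intervalIntegrable_iff_integrableOn_Ioc_of_le zero_le_one] at h
  refine h.congr_fun (fun t ht => ?_) measurableSet_Ioc
  beta_reduce
  rw [Real.rpow_neg ht.1.le, ← Real.sqrt_eq_rpow]

def thetaTerm (p : ℕ) (a : ℝ) (z : ℂ) : ℂ :=
  a * exp (2 * π * I * z * p * a ^ 2)

lemma theta1_eq_tsum_thetaTerm (p : ℕ) (s : ℤ) (z : ℂ) :
    theta1 p s z = ∑' ν : ℤ, thetaTerm p (ν + s / (2 * p)) z := by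
  simp only [theta1, thetaTerm]
  push_cast
  rfl

lemma norm_thetaTerm_le (p : ℕ) (a : ℝ) {z : ℂ} {δ : ℝ} (hz : δ ≤ z.im) :
    ‖thetaTerm p a z‖ ≤ |a| * Real.exp (-π * a ^ 2 * (2 * p * δ)) := by
  rw [thetaTerm, norm_mul, norm_real, Real.norm_eq_abs, norm_exp]
  gcongr
  have hre : (2 * π * I * z * p * a ^ 2 : ℂ).re = -π * a ^ 2 * (2 * p * z.im) := by
    simp [mul_re, mul_im, sq]
    ring
  rw [hre]
  have : 0 ≤ π * a ^ 2 * (2 * p) := by positivity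
  nlinarith

lemma Complex.min_im_le_im_add_mul_sub (τ w : ℂ) {t : ℝ} (ht : t ∈ Set.Icc (0:ℝ) 1) :
    min τ.im w.im ≤ (τ + t * (w - τ)).im := by
  simpa [Complex.real_smul] using (convex_halfSpace_im_ge (min τ.im w.im)).add_smul_sub_mem
    (min_le_left τ.im w.im) (min_le_right τ.im w.im) ht

lemma integral_tsum_inv_sqrt_smul_thetaTerm {p : ℕ} (hp : 0 < p) (r : ℝ) {τ w : ℂ}
    (hτ : 0 < τ.im) (hw : 0 < w.im) (K : ℂ) :
    ∫ t in Set.Ioc (0:ℝ) 1, ∑' ν : ℤ, (√t)⁻¹ • (K * thetaTerm p (ν + r) (τ + t * (w - τ))) =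
      ∑' ν : ℤ, ∫ t in Set.Ioc (0:ℝ) 1, (√t)⁻¹ • (K * thetaTerm p (ν + r) (τ + t * (w - τ))) := by
  set δ := min τ.im w.im
  have hδ : 0 < δ := lt_min hτ hw
  refine integral_tsum_smul_of_norm_le integrableOn_Ioc_zero_one_inv_sqrt
    (fun ν => Continuous.aestronglyMeasurable (by unfold thetaTerm; fun_prop))
    ((HurwitzKernelBounds.summable_f_int 1 r (by positivity : 0 < 2 * p * δ)).mul_left ‖K‖)
    fun ν => ?_
  filter_upwards [ae_restrict_mem measurableSet_Ioc] with t ht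
  rw [norm_mul]
  gcongr
  simpa [HurwitzKernelBounds.f_int] using
    norm_thetaTerm_le p (ν + r) (Complex.min_im_le_im_add_mul_sub τ w ⟨ht.1.le, ht.2⟩)

lemma cerf_neg_I_mul (β : ℂ) :
    cerf (-I * β) =
      ((2 / √π : ℝ) : ℂ) * (-I * β) * ∫ t in Set.Ioc (0:ℝ) 1, exp ((t : ℂ) ^ 2 * β ^ 2) := by
  rw [cerf, intervalIntegral.integral_of_le zero_le_one, integral_const_mul, mul_assoc _ (-I * β)]
  congr 3
  funext t
  congr 1
  linear_combination (-(t : ℂ) ^ 2 * β ^ 2) * I_sq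

lemma cerf_mul_exp_eq_integral (p : ℕ) (τ c : ℂ) (a : ℝ) :
    cerf (-I * (2 * π * I * p * c) ^ ((1:ℂ)/2) * a) * exp (2 * π * I * τ * p * a ^ 2) =
      (√(2 * p) : ℂ) * ∫ t in Set.Ioc (0:ℝ) 1,
        (√t)⁻¹ • (c / (I * c) ^ ((1:ℂ)/2) * thetaTerm p a (τ + t * c)) := by
  set Z := (I * c) ^ ((1:ℂ)/2)
  set J := ∫ u in Set.Ioc (0:ℝ) 1, exp (2 * π * I * (τ + ((u ^ 2 : ℝ) : ℂ) * c) * p * a ^ 2)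
  have hB : (2 * π * I * p * c) ^ ((1:ℂ)/2) = (√(2 * π * p) : ℂ) * Z := by
    rw [show (2 * π * I * p * c : ℂ) = ((2 * π * p : ℝ) : ℂ) * (I * c) by push_cast; ring]
    exact ofReal_mul_cpow_half (by positivity) _
  have hZ : Z ^ 2 = I * c := by simp only [Z, one_div, cpow_ofNat_inv_pow]
  have hL : cerf (-I * (2 * π * I * p * c) ^ ((1:ℂ)/2) * a) * exp (2 * π * I * τ * p * a ^ 2) =
      ((2 / √π : ℝ) : ℂ) * (-I * ((√(2 * π * p) : ℂ) * Z * a)) * J := by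
    rw [hB, mul_assoc (-I), cerf_neg_I_mul, mul_assoc, ← integral_mul_const]
    congr 2
    ext u
    rw [← exp_add]
    congr 1
    have hsqrt : ((√(2 * π * p) : ℝ) : ℂ) ^ 2 = 2 * π * p := by
      rw [← ofReal_pow, Real.sq_sqrt (by positivity)]; push_cast; ring
    push_cast
    linear_combination ((u : ℂ) ^ 2 * a ^ 2) * (Z ^ 2 * hsqrt + 2 * π * p * hZ)
  have hR : ∫ t in Set.Ioc (0:ℝ) 1,
        (√t)⁻¹ • (c / Z * thetaTerm p a (τ + t * c)) = 2 * (c / Z * a) * J := by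
    rw [integral_Ioc_zero_one_inv_sqrt_smul, ← integral_const_mul, real_smul, ← integral_const_mul]
    simp only [thetaTerm]
    push_cast
    congr 1
    ext u
    ring
  have hcZ : c / Z = -I * Z := by
    rw [show c = -I * (I * c) by linear_combination c * I_sq, mul_div_assoc,
      div_cpow_half_self]
  have hsqrt : √(2 * π * p) = √(2 * p) * √π := by
    rw [← Real.sqrt_mul (by positivity)]; ring_nf
  have hπ : (√π : ℂ) ≠ 0 := ofReal_ne_zero.2 (Real.sqrt_pos.2 Real.pi_pos).ne'
  rw [hL, hR, hcZ, hsqrt]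
  push_cast
  field_simp

end

theorem statement15_general (p : ℕ) (hp : 0 < p) (s : ℤ) (τ w : ℂ)
    (hτ : 0 < τ.im) (hw : 0 < w.im) :
    psiA1 p s τ w =
      ((Real.sqrt (2 * p) : ℝ) : ℂ) *
        ∫ t in (0:ℝ)..1, (w - τ) * theta1 p s (τ + (t:ℂ) * (w - τ)) /
          (Complex.I * ((τ + (t:ℂ) * (w - τ)) - τ)) ^ ((1:ℂ)/2) := by
  have hcast : ∀ ν : ℤ, (ν : ℂ) + s / (2 * p) = ((ν + s / (2 * p) : ℝ) : ℂ) := fun ν => by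
    push_cast; rfl
  set K := (w - τ) / (Complex.I * (w - τ)) ^ ((1:ℂ)/2)
  calc psiA1 p s τ w = ∑' ν : ℤ, (√(2 * p) : ℂ) * ∫ t in Set.Ioc (0:ℝ) 1,
        (√t)⁻¹ • (K * thetaTerm p (ν + s / (2 * p)) (τ + t * (w - τ))) := by
        simp only [psiA1, hcast, cerf_mul_exp_eq_integral]
        rfl
    _ = (√(2 * p) : ℂ) * ∫ t in Set.Ioc (0:ℝ) 1,
        ∑' ν : ℤ, (√t)⁻¹ • (K * thetaTerm p (ν + s / (2 * p)) (τ + t * (w - τ))) := by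
        rw [tsum_mul_left, integral_tsum_inv_sqrt_smul_thetaTerm hp _ hτ hw]
    _ = _ := by
        rw [intervalIntegral.integral_of_le zero_le_one]
        refine congrArg _ (setIntegral_congr_fun measurableSet_Ioc fun t ht => ?_)
        rw [add_sub_cancel_left,
          show Complex.I * (t * (w - τ)) = (t : ℂ) * (Complex.I * (w - τ)) by ring,
          Complex.ofReal_mul_cpow_half ht.1.le, theta1_eq_tsum_thetaTerm, ← tsum_mul_left,
          ← tsum_div_const]
        refine tsum_congr fun ν => ?_
        rw [Complex.real_smul]
        push_cast
        ring

/-- the Eichler integral representation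
`ψ̂^{[A₁]}_{p,s}(τ,w) = √(2p) ∫_τ^w θ^{[1]}_{p,s}(w₁)/√(i(w₁−τ)) dw₁`, the integral being
parametrized along the path `w₁ = τ + t(w−τ)`, `t ∈ [0,1]`, with principal square roots. -/
theorem statement15 (p : ℕ) (hp : 0 < p) (s : ℤ) (τ w : ℂ)
    (hτ : 0 < τ.im) (hw : 0 < w.im) (hne : w ≠ τ) :
    psiA1 p s τ w =
      ((Real.sqrt (2 * p) : ℝ) : ℂ) *
        ∫ t in (0:ℝ)..1, (w - τ) * theta1 p s (τ + (t:ℂ) * (w - τ)) /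
          (Complex.I * ((τ + (t:ℂ) * (w - τ)) - τ)) ^ ((1:ℂ)/2) :=
  statement15_general p hp s τ w hτ hw
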